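/- Let Ω be a nonempty locally compact Hausdorff topological space, let q : Ω → ℂ be a bounded continuous function, and let M_q be the bounded multiplication operator on X := C₀(Ω) (the space of continuous functions vanishing at infinity with the sup norm) given by (M_q f)(s) = q(s)·f(s). Then σ_n(M_q) = closure(convexHull(q(Ω))), the closed convex hull of the range of q. -/

import Mathlib

open Complex

variable {X : Type*} [NormedAddCommGroup X] [NormedSpace ℂ X] [CompleteSpace X]

/-- The open half plane `H_{θ,ω}`, the rotation by the angle `θ` of `{z | Re z > ω}`. -/
def halfPlane (θ ω : ℝ) : Set ℂ :=
  {z : ℂ | ω < (Complex.exp (-(θ : ℂ) * Complex.I) * z).re}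

/-- The numerical resolvent set of a bounded operator `A` : the union of all open half
planes `H_{θ,ω}` contained in the resolvent set of `A` on which
`‖R(z, A)‖ ≤ 1 / dist(z, ∂H_{θ,ω}) = 1 / (Re (e^{-iθ} z) - ω)`. -/
noncomputable def numResolventSet (A : X →L[ℂ] X) : Set ℂ :=
  {z : ℂ | ∃ θ ω : ℝ, z ∈ halfPlane θ ω ∧ halfPlane θ ω ⊆ resolventSet ℂ A ∧
    ∀ w ∈ halfPlane θ ω,
      ‖resolvent A w‖ ≤ 1 / ((Complex.exp (-(θ : ℂ) * Complex.I) * w).re - ω)}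

/-- The numerical spectrum of a bounded operator `A`. -/
noncomputable def numSpectrum (A : X →L[ℂ] X) : Set ℂ := (numResolventSet A)ᶜ

/-- The duality set `J(x)` of a vector `x`. -/
noncomputable def dualitySet (x : X) : Set (X →L[ℂ] ℂ) :=
  {j | j x = (‖x‖ ^ 2 : ℝ) ∧ ‖j‖ = ‖x‖}

open scoped ZeroAtInfty

/-!
A closed convex set `K ⊆ ℂ` is the intersection of the closed half planes containing it, so
`z ∉ K` lies in an open half plane `H` disjoint from `K`, and for `w ∈ H` the distance from `w`
to `∂H` is at most the distance from `w` to `K`. For `K` the closed convex hull of `q(Ω)`, the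
resolvent of `M_q` at `w ∉ K` is multiplication by `(w - q)⁻¹`, of norm at most
`1 / dist(w, q(Ω))`, so every such `H` is admissible and `σ_n(M_q) ⊆ K`.

Conversely `σ_n(A)` is an intersection of closed half planes containing `σ(A)`, and
`q(Ω) ⊆ σ(M_q)`: the range of `q(s) - M_q` consists of functions vanishing at `s`, which misses
a bump function at `s`.
-/

open Filter Set
open scoped BoundedContinuousFunction

theorem Complex.norm_exp_neg_ofReal_mul_I (θ : ℝ) : ‖exp (-(θ : ℂ) * I)‖ = 1 := by
  rw [← ofReal_neg, norm_exp_ofReal_mul_I]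

theorem Complex.conj_eq_norm_mul_exp_neg_arg_mul_I (a : ℂ) :
    (starRingEnd ℂ) a = ‖a‖ * exp (-(arg a : ℂ) * I) := by
  conv_lhs => rw [← norm_mul_exp_arg_mul_I a]
  rw [map_mul, conj_ofReal, ← exp_conj, map_mul, conj_ofReal, conj_I, neg_mul, mul_neg]

theorem isOpen_halfPlane (θ ω : ℝ) : IsOpen (halfPlane θ ω) :=
  isOpen_lt continuous_const (by fun_prop)

theorem convex_compl_halfPlane (θ ω : ℝ) : Convex ℝ (halfPlane θ ω)ᶜ := by
  simp only [halfPlane, compl_ofPred, not_lt]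
  exact convex_halfSpace_le (reLm.comp (LinearMap.mulLeft ℝ (exp (-(θ : ℂ) * I)))).isLinear ω

theorem sub_le_norm_sub_of_notMem_halfPlane {θ ω : ℝ} {v : ℂ} (hv : v ∉ halfPlane θ ω) (w : ℂ) :
    (exp (-(θ : ℂ) * I) * w).re - ω ≤ ‖w - v‖ := by
  have hv : (exp (-(θ : ℂ) * I) * v).re ≤ ω := not_lt.1 hv
  calc (exp (-(θ : ℂ) * I) * w).re - ω ≤ (exp (-(θ : ℂ) * I) * (w - v)).re := by
        rw [mul_sub, sub_re]; linarith
    _ ≤ ‖exp (-(θ : ℂ) * I) * (w - v)‖ := re_le_norm _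
    _ = ‖w - v‖ := by rw [norm_mul, norm_exp_neg_ofReal_mul_I, one_mul]

theorem halfPlane_arg_eq_setOf_lt_inner {a : ℂ} (ha : a ≠ 0) (u : ℝ) :
    halfPlane (arg a) (u / ‖a‖) = {v | u < inner ℝ a v} := by
  have hnorm : 0 < ‖a‖ := norm_pos_iff.2 ha
  ext v
  simp only [halfPlane, mem_ofPred_eq, Complex.inner, mul_comm v,
    conj_eq_norm_mul_exp_neg_arg_mul_I, mul_assoc, re_ofReal_mul, div_lt_iff₀ hnorm, mul_comm ‖a‖]

theorem exists_halfPlane_subset_compl {K : Set ℂ} (hK : Convex ℝ K) (hKc : IsClosed K) {z : ℂ}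
    (hz : z ∉ K) : ∃ θ ω : ℝ, z ∈ halfPlane θ ω ∧ K ⊆ (halfPlane θ ω)ᶜ := by
  rcases K.eq_empty_or_nonempty with rfl | ⟨k, hk⟩
  · exact ⟨0, z.re - 1, by simp [halfPlane], empty_subset _⟩
  obtain ⟨φ, u, hφK, hφz⟩ := geometric_hahn_banach_closed_point hK hKc hz
  have hφ : φ ≠ 0 := by
    rintro rfl
    exact lt_asymm (hφK k hk) hφz
  set a := (InnerProductSpace.toDual ℝ ℂ).symm φ
  have ha : a ≠ 0 := by simpa [a] using hφ
  refine ⟨arg a, u / ‖a‖, ?_⟩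
  simp only [halfPlane_arg_eq_setOf_lt_inner ha, a, InnerProductSpace.toDual_symm_apply,
    subset_def, mem_compl_iff, mem_ofPred_eq, not_lt]
  exact ⟨hφz, fun v hv => (hφK v hv).le⟩

namespace ZeroAtInftyContinuousMap

section MulOperator

variable {Ω 𝕜 : Type*} [TopologicalSpace Ω] [NontriviallyNormedField 𝕜]

noncomputable def mulOperator (g : Ω →ᵇ 𝕜) : C₀(Ω, 𝕜) →L[𝕜] C₀(Ω, 𝕜) :=
  LinearMap.mkContinuous
    { toFun := fun f => ⟨g.toContinuousMap * f,
        isBoundedUnder_le_mul_tendsto_zero (isBoundedUnder_of ⟨‖g‖, g.norm_coe_le_norm⟩)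
          (zero_at_infty f)⟩
      map_add' := fun f f' => by ext s; exact mul_add (g s) (f s) (f' s)
      map_smul' := fun c f => by ext s; exact mul_left_comm (g s) c (f s) }
    ‖g‖ fun f => by
      rw [← norm_toBCF_eq_norm, ← norm_toBCF_eq_norm]
      exact norm_mul_le g f.toBCF

@[simp]
theorem mulOperator_apply (g : Ω →ᵇ 𝕜) (f : C₀(Ω, 𝕜)) (s : Ω) : mulOperator g f s = g s * f s :=
  rfl

theorem norm_mulOperator_le (g : Ω →ᵇ 𝕜) : ‖mulOperator g‖ ≤ ‖g‖ :=
  LinearMap.mkContinuous_norm_le _ (norm_nonneg g) _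

theorem mulOperator_mul (g h : Ω →ᵇ 𝕜) : mulOperator (g * h) = mulOperator g * mulOperator h := by
  ext; simp [mul_assoc]

theorem mulOperator_one : mulOperator (1 : Ω →ᵇ 𝕜) = 1 := by
  ext; simp

theorem smul_one_sub_mulOperator (w : 𝕜) (q : Ω →ᵇ 𝕜) :
    w • 1 - mulOperator q = mulOperator (.const Ω w - q) := by
  ext; simp [sub_mul]

theorem isUnit_mulOperator_and_norm_inverse_le {g : Ω →ᵇ 𝕜} {δ : ℝ} (hδ : 0 < δ)
    (hg : ∀ s, δ ≤ ‖g s‖) :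
    IsUnit (mulOperator g) ∧ ‖Ring.inverse (mulOperator g)‖ ≤ δ⁻¹ := by
  have hg0 : ∀ s, g s ≠ 0 := fun s h => by simpa [h] using hδ.trans_le (hg s)
  let h : Ω →ᵇ 𝕜 := .ofNormedAddCommGroup (fun s => (g s)⁻¹) (g.continuous.inv₀ hg0) δ⁻¹
    fun s => by rw [norm_inv]; exact inv_anti₀ hδ (hg s)
  have hgh : g * h = 1 := by ext s; exact mul_inv_cancel₀ (hg0 s)
  let u : (C₀(Ω, 𝕜) →L[𝕜] C₀(Ω, 𝕜))ˣ :=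
    ⟨mulOperator g, mulOperator h, by rw [← mulOperator_mul, hgh, mulOperator_one],
      by rw [← mulOperator_mul, mul_comm, hgh, mulOperator_one]⟩
  refine ⟨u.isUnit, ?_⟩
  rw [show mulOperator g = u from rfl, Ring.inverse_unit]
  exact (norm_mulOperator_le h).trans
    (BoundedContinuousFunction.norm_ofNormedAddCommGroup_le _ (inv_nonneg.2 hδ.le) _)

theorem mem_resolventSet_mulOperator_and_norm_resolvent_le (q : Ω →ᵇ 𝕜) {w : 𝕜} {δ : ℝ}
    (hδ : 0 < δ) (hq : ∀ s, δ ≤ ‖w - q s‖) :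
    w ∈ resolventSet 𝕜 (mulOperator q) ∧ ‖resolvent (mulOperator q) w‖ ≤ δ⁻¹ := by
  rw [spectrum.mem_resolventSet_iff, resolvent, Algebra.algebraMap_eq_smul_one,
    smul_one_sub_mulOperator]
  exact isUnit_mulOperator_and_norm_inverse_le hδ hq

end MulOperator

theorem range_subset_spectrum_mulOperator {Ω 𝕜 : Type*} [TopologicalSpace Ω]
    [LocallyCompactSpace Ω] [T2Space Ω] [RCLike 𝕜] (q : Ω →ᵇ 𝕜) :
    range q ⊆ spectrum 𝕜 (mulOperator q) := by
  rintro _ ⟨s, rfl⟩ hunit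
  obtain ⟨φ, hφc, -, hφs⟩ := exists_continuous_nonneg_pos s
  let f : C₀(Ω, 𝕜) := ⟨⟨fun t => (φ t : 𝕜), by fun_prop⟩,
    (hφc.comp_left (g := ((↑) : ℝ → 𝕜)) RCLike.ofReal_zero).is_zero_at_infty⟩
  obtain ⟨g, hg⟩ := (ContinuousLinearMap.isHomeomorph_of_isUnit
    (spectrum.mem_resolventSet_iff.1 hunit)).surjective f
  have hfs : f s = 0 := by
    simpa [Algebra.algebraMap_eq_smul_one, smul_one_sub_mulOperator] using congrArg (· s) hg.symm
  exact hφs (by simpa [f] using hfs)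

end ZeroAtInftyContinuousMap

section NumSpectrum

variable {E : Type*} [NormedAddCommGroup E] [NormedSpace ℂ E]

theorem closure_convexHull_spectrum_subset_numSpectrum (A : E →L[ℂ] E) :
    closure (convexHull ℝ (spectrum ℂ A)) ⊆ numSpectrum A := by
  rintro z hz ⟨θ, ω, hzH, hHres, -⟩
  have hσ : spectrum ℂ A ⊆ (halfPlane θ ω)ᶜ := fun v hv hvH => hv (hHres hvH)
  exact closure_minimal (convexHull_min hσ (convex_compl_halfPlane θ ω))
    (isOpen_halfPlane θ ω).isClosed_compl hz hzH

theorem numSpectrum_subset_of_norm_resolvent_le {A : E →L[ℂ] E} {K : Set ℂ} (hK : Convex ℝ K)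
    (hKc : IsClosed K)
    (hA : ∀ w δ, 0 < δ → (∀ v ∈ K, δ ≤ ‖w - v‖) →
      w ∈ resolventSet ℂ A ∧ ‖resolvent A w‖ ≤ δ⁻¹) :
    numSpectrum A ⊆ K := by
  intro z hz
  by_contra hzK
  obtain ⟨θ, ω, hzH, hKH⟩ := exists_halfPlane_subset_compl hK hKc hzK
  have hres : ∀ w ∈ halfPlane θ ω, w ∈ resolventSet ℂ A ∧
      ‖resolvent A w‖ ≤ ((exp (-(θ : ℂ) * I) * w).re - ω)⁻¹ := fun w hw =>
    hA w _ (sub_pos.2 hw) fun v hv => sub_le_norm_sub_of_notMem_halfPlane (hKH hv) w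
  exact hz ⟨θ, ω, hzH, fun w hw => (hres w hw).1,
    fun w hw => by rw [one_div]; exact (hres w hw).2⟩

end NumSpectrum

theorem numSpectrum_mulOperator_C0_general (Ω : Type*) [TopologicalSpace Ω] [LocallyCompactSpace Ω]
    [T2Space Ω] (q : BoundedContinuousFunction Ω ℂ)
    (M : C₀(Ω, ℂ) →L[ℂ] C₀(Ω, ℂ)) (hM : ∀ f : C₀(Ω, ℂ), ∀ s : Ω, M f s = q s * f s) :
    numSpectrum M = closure (convexHull ℝ (Set.range ⇑q)) := by
  obtain rfl : M = ZeroAtInftyContinuousMap.mulOperator q := by ext f s; exact hM f s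
  refine subset_antisymm ?_ ?_
  · refine numSpectrum_subset_of_norm_resolvent_le (convex_convexHull ℝ _).closure
      isClosed_closure fun w δ hδ hK =>
        ZeroAtInftyContinuousMap.mem_resolventSet_mulOperator_and_norm_resolvent_le q hδ
        fun s => hK (q s) (subset_closure (subset_convexHull ℝ _ ⟨s, rfl⟩))
  · exact (closure_mono (convexHull_mono
      (ZeroAtInftyContinuousMap.range_subset_spectrum_mulOperator q))).trans
        (closure_convexHull_spectrum_subset_numSpectrum _)

/-- The numerical spectrum of a multiplication operator `M_q` on `C₀(Ω)` is the closed
convex hull of the range of `q`. -/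
theorem numSpectrum_mulOperator_C0 (Ω : Type*) [TopologicalSpace Ω] [LocallyCompactSpace Ω]
    [T2Space Ω] [Nonempty Ω] (q : BoundedContinuousFunction Ω ℂ)
    (M : C₀(Ω, ℂ) →L[ℂ] C₀(Ω, ℂ)) (hM : ∀ f : C₀(Ω, ℂ), ∀ s : Ω, M f s = q s * f s) :
    numSpectrum M = closure (convexHull ℝ (Set.range ⇑q)) :=
  numSpectrum_mulOperator_C0_general Ω q M hM
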